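/- Let 𝔳 = {ν_i}_{i∈I} be a totally ordered set in V such that every f ∈ K[x] is 𝔳-stable, and let ν = sup_{i∈I} ν_i be the valuation defined by ν(f) = ν_{i_f}(f). Then the direct limit lim→ G_{ν_i} of the direct system {(G_{ν_i}, φ_{ij})}_{i≤j} is isomorphic to G_ν as commutative rings with unity. -/

import Mathlib

open Polynomial

/-- An additive valuation (possibly with nontrivial support) on a commutative
ring `R`, with values in `Γ ∪ {∞}`. -/
structure ValOn (R : Type*) [CommRing R] (Γ : Type*) [AddCommGroup Γ] [LinearOrder Γ] [IsOrderedAddMonoid Γ] where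
  v : R → WithTop Γ
  v_zero : v 0 = ⊤
  v_one : v 1 = 0
  v_mul : ∀ a b, v (a * b) = v a + v b
  min_le_v_add : ∀ a b, min (v a) (v b) ≤ v (a + b)

namespace ValOn

variable {R : Type*} [CommRing R] {Γ : Type*} [AddCommGroup Γ] [LinearOrder Γ] [IsOrderedAddMonoid Γ]

theorem v_neg (w : ValOn R Γ) (a : R) : w.v (-a) = w.v a := by
  have h1 : w.v (-1) + w.v (-1) = 0 := by
    rw [← w.v_mul]; norm_num [w.v_one]
  have h2 : w.v (-1) = 0 := by
    cases hx : w.v (-1) with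
    | top => rw [hx] at h1; simp at h1
    | coe x =>
        rw [hx, ← WithTop.coe_add, ← WithTop.coe_zero, WithTop.coe_inj] at h1
        have hx0 : x = 0 := by
          rcases lt_trichotomy x 0 with hc | hc | hc
          · exact absurd h1 (ne_of_lt (add_neg hc hc))
          · exact hc
          · exact absurd h1 (ne_of_gt (add_pos hc hc))
        rw [hx0, WithTop.coe_zero]
  calc w.v (-a) = w.v (-1 * a) := by rw [neg_one_mul]
  _ = w.v a := by rw [w.v_mul, h2, zero_add]

theorem le_v_sum (w : ValOn R Γ) {α : Type*} {γ : WithTop Γ} (s : Finset α) (h : α → R)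
    (H : ∀ t ∈ s, γ ≤ w.v (h t)) : γ ≤ w.v (∑ t ∈ s, h t) := by
  classical
  induction s using Finset.induction_on with
  | empty => simp [w.v_zero]
  | @insert _ _ hx ih =>
      rw [Finset.sum_insert hx]
      refine le_trans ?_ (w.min_le_v_add _ _)
      rw [le_min_iff]
      exact ⟨H _ (Finset.mem_insert_self _ _),
        ih fun t ht => H t (Finset.mem_insert_of_mem ht)⟩

theorem lt_v_sum (w : ValOn R Γ) {α : Type*} {γ : WithTop Γ} (hγ : γ ≠ ⊤) (s : Finset α)
    (h : α → R) (H : ∀ t ∈ s, γ < w.v (h t)) : γ < w.v (∑ t ∈ s, h t) := by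
  classical
  induction s using Finset.induction_on with
  | empty => simp [w.v_zero]; exact lt_top_iff_ne_top.mpr hγ
  | @insert _ _ hx ih =>
      rw [Finset.sum_insert hx]
      refine lt_of_lt_of_le ?_ (w.min_le_v_add _ _)
      rw [lt_min_iff]
      exact ⟨H _ (Finset.mem_insert_self _ _),
        ih fun t ht => H t (Finset.mem_insert_of_mem ht)⟩

/-- The subring `⊕_{γ ∈ Γ} P_γ` of the monoid algebra `R[Γ]`, where
`P_γ = {f : γ ≤ v f}`.  The graded ring `G_v = ⊕_γ P_γ/P_γ⁺` is realized below as the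
quotient of this subring by the ideal `⊕_γ P_γ⁺`. -/
def gradedCarrier (w : ValOn R Γ) : Subring (AddMonoidAlgebra R Γ) where
  carrier := {s | ∀ γ : Γ, (γ : WithTop Γ) ≤ w.v (s.coeff γ)}
  zero_mem' := by intro γ; simp [w.v_zero]
  one_mem' := by
    intro γ
    classical
    show (γ : WithTop Γ) ≤ w.v ((AddMonoidAlgebra.single (0:Γ) (1:R)).coeff γ)
    rw [AddMonoidAlgebra.coeff_single, Finsupp.single_apply]
    split_ifs with h
    · subst h; simp [w.v_one]
    · simp [w.v_zero]
  add_mem' := by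
    intro a b ha hb γ
    refine le_trans ?_ (w.min_le_v_add _ _)
    exact le_min (ha γ) (hb γ)
  neg_mem' := by
    intro a ha γ
    show (γ : WithTop Γ) ≤ w.v ((-a).coeff γ)
    rw [AddMonoidAlgebra.coeff_neg, Finsupp.neg_apply, w.v_neg]
    exact ha γ
  mul_mem' := by
    classical
    intro a b ha hb γ
    rw [AddMonoidAlgebra.coeff_mul]
    rw [Finsupp.sum]
    refine w.le_v_sum _ _ (fun α hα => ?_)
    rw [Finsupp.sum]
    refine w.le_v_sum _ _ (fun β hβ => ?_)
    split_ifs with h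
    · subst h
      rw [w.v_mul, WithTop.coe_add]
      exact add_le_add (ha α) (hb β)
    · simp [w.v_zero]

/-- The ideal `⊕_{γ ∈ Γ} P_γ⁺` of `gradedCarrier w`. -/
def gradedIdeal (w : ValOn R Γ) : Ideal (gradedCarrier w) where
  carrier := {s | ∀ γ : Γ, (γ : WithTop Γ) < w.v ((s : AddMonoidAlgebra R Γ).coeff γ)}
  zero_mem' := by intro γ; simp [w.v_zero]
  add_mem' := by
    intro a b ha hb γ
    refine lt_of_lt_of_le ?_ (w.min_le_v_add _ _)
    exact lt_min (ha γ) (hb γ)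
  smul_mem' := by
    classical
    intro c x hx γ
    rw [smul_eq_mul]
    show (γ : WithTop Γ) < w.v (((c : AddMonoidAlgebra R Γ) * (x : AddMonoidAlgebra R Γ)).coeff γ)
    rw [AddMonoidAlgebra.coeff_mul, Finsupp.sum]
    refine w.lt_v_sum (WithTop.coe_ne_top) _ _ (fun α hα => ?_)
    rw [Finsupp.sum]
    refine w.lt_v_sum (WithTop.coe_ne_top) _ _ (fun β hβ => ?_)
    split_ifs with h
    · subst h
      rw [w.v_mul, WithTop.coe_add]
      exact WithTop.add_lt_add_of_le_of_lt WithTop.coe_ne_top (c.2 α) (hx β)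
    · simp [w.v_zero]
end ValOn

/-- The graded ring `G_w = ⊕_{γ} P_γ/P_γ⁺` associated to the valuation `w`,
realized as a quotient. -/
abbrev Graded {R : Type*} [CommRing R] {Γ : Type*} [AddCommGroup Γ] [LinearOrder Γ] [IsOrderedAddMonoid Γ]
    (w : ValOn R Γ) : Type _ :=
  (ValOn.gradedCarrier w) ⧸ (ValOn.gradedIdeal w)

namespace ValOn

variable {R : Type*} [CommRing R] {Γ : Type*} [AddCommGroup Γ] [LinearOrder Γ] [IsOrderedAddMonoid Γ]

/-- `inv_w f`, the initial form (image of `f` in the homogeneous component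
`P_{v f}/P_{v f}⁺` of the graded ring), with `inv_w f = 0` when `f ∈ supp w`. -/
noncomputable def initialForm (w : ValOn R Γ) (f : R) : Graded w :=
  if h : w.v f = ⊤ then 0
  else Ideal.Quotient.mk (gradedIdeal w)
    ⟨AddMonoidAlgebra.single ((w.v f).untop h) f, by
      intro γ
      classical
      show (γ : WithTop Γ) ≤ w.v ((AddMonoidAlgebra.single ((w.v f).untop h) f).coeff γ)
      rw [AddMonoidAlgebra.coeff_single, Finsupp.single_apply]
      split_ifs with hh
      · rw [← hh, WithTop.coe_untop]
      · simp [w.v_zero]⟩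

theorem gradedCarrier_mono {w₁ w₂ : ValOn R Γ} (h : ∀ f, w₁.v f ≤ w₂.v f) :
    gradedCarrier w₁ ≤ gradedCarrier w₂ :=
  fun s hs γ => (hs γ).trans (h _)

/-- The homomorphism `φ : G_{w₁} → G_{w₂}` of graded rings, for `w₁ ≤ w₂`:
it sends `inv_{w₁} f` to `inv_{w₂} f` if `w₁ f = w₂ f` and to `0` if `w₁ f < w₂ f`. -/
noncomputable def phi (w₁ w₂ : ValOn R Γ) (h : ∀ f, w₁.v f ≤ w₂.v f) :
    Graded w₁ →+* Graded w₂ :=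
  Ideal.Quotient.lift (gradedIdeal w₁)
    ((Ideal.Quotient.mk (gradedIdeal w₂)).comp (Subring.inclusion (gradedCarrier_mono h)))
    (by
      intro a ha
      rw [RingHom.comp_apply, Ideal.Quotient.eq_zero_iff_mem]
      exact fun γ => lt_of_lt_of_le (ha γ) (h _))

end ValOn


open ValOn

section PolyDefs

variable {K : Type*} [Field K] {Γ : Type*} [AddCommGroup Γ] [LinearOrder Γ] [IsOrderedAddMonoid Γ]

/-- A polynomial `f` is `𝔳`-stable for a family `𝔳 = (ν_i)_{i ∈ I}` if the values `ν_i(f)`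
eventually stabilize. -/
def Stable {I : Type*} [Preorder I] (ν : I → ValOn (Polynomial K) Γ) (f : Polynomial K) : Prop :=
  ∃ i : I, ∀ j : I, i ≤ j → (ν j).v f = (ν i).v f

/-- The truncation `w_q` of `w` at `q`:
`w_q(f) = min_j w(f_j q^j)` where `f = ∑ f_j q^j` is the `q`-expansion of `f`
(for monic non-constant `q`, the `j`-th coefficient of the `q`-expansion is
`(f /ₘ q^j) %ₘ q`, and all the nonzero coefficients occur for `j ≤ natDegree f`). -/
noncomputable def truncVal (w : ValOn (Polynomial K) Γ) (q f : Polynomial K) : WithTop Γ :=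
  (Finset.range (f.natDegree + 1)).inf' Finset.nonempty_range_add_one
    (fun j => w.v (((f /ₘ q ^ j) %ₘ q) * q ^ j))

/-- `δ(f) = max {ν̄(x - a) : a a root of f}` for a polynomial over an algebraically closed
field, with the convention `δ(f) = ⊥ = -∞` when `f` has no roots (e.g. `deg f = 0`). -/
noncomputable def deltaOf {F : Type*} [Field F] (wbar : ValOn (Polynomial F) Γ)
    (f : Polynomial F) : WithBot (WithTop Γ) :=
  (f.roots.map (fun a => ((wbar.v (X - C a) : WithTop Γ) : WithBot (WithTop Γ)))).sup

/-- `δ(f)` of `f ∈ K[x]`, computed via the fixed extension `ν̄` of `ν` to `K̄[x]`. -/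
noncomputable def delta (wbar : ValOn (Polynomial (AlgebraicClosure K)) Γ)
    (f : Polynomial K) : WithBot (WithTop Γ) :=
  deltaOf wbar (f.map (algebraMap K (AlgebraicClosure K)))

/-- `Q` is a key polynomial (of level `δ(Q)`) for the valuation `ν` (with fixed extension
`ν̄` to `K̄[x]`): `Q` is monic and `δ(f) ≥ δ(Q) → deg f ≥ deg Q` for every nonzero `f`. -/
def IsKeyPoly (wbar : ValOn (Polynomial (AlgebraicClosure K)) Γ) (Q : Polynomial K) : Prop :=
  Q.Monic ∧ ∀ f : Polynomial K, f ≠ 0 → delta wbar Q ≤ delta wbar f → Q.degree ≤ f.degree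

/-- `Ψ_n`: the set of key polynomials of degree `n`. -/
def Psi (wbar : ValOn (Polynomial (AlgebraicClosure K)) Γ) (n : ℕ) : Set (Polynomial K) :=
  {Q | IsKeyPoly wbar Q ∧ Q.natDegree = n}

/-- The set `K_n = {f : ν_Q(f) < ν(f) for all Q ∈ Ψ_n}`. -/
def LimitSet (w : ValOn (Polynomial K) Γ) (wbar : ValOn (Polynomial (AlgebraicClosure K)) Γ)
    (n : ℕ) : Set (Polynomial K) :=
  {f | ∀ Q ∈ Psi wbar n, truncVal w Q f < w.v f}

/-- A limit key polynomial for `Ψ_n`: a monic polynomial in `K_n` of least degree. -/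
def IsLimitKeyPoly (w : ValOn (Polynomial K) Γ)
    (wbar : ValOn (Polynomial (AlgebraicClosure K)) Γ) (n : ℕ) (Qn : Polynomial K) : Prop :=
  Qn.Monic ∧ Qn ∈ LimitSet w wbar n ∧ ∀ g ∈ LimitSet w wbar n, Qn.degree ≤ g.degree

/-- `g` is `𝔳`-stable for the family `𝔳 = (ν_Q)_{Q ∈ Ψ_n}`, ordered by `Q ⪯ Q' ↔ ν_Q ≤ ν_{Q'}`. -/
def PsiStable (w : ValOn (Polynomial K) Γ) (wbar : ValOn (Polynomial (AlgebraicClosure K)) Γ)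
    (n : ℕ) (g : Polynomial K) : Prop :=
  ∃ Q ∈ Psi wbar n, ∀ Q' ∈ Psi wbar n,
    (∀ h : Polynomial K, truncVal w Q h ≤ truncVal w Q' h) → truncVal w Q' g = truncVal w Q g

/-- `v` is a Krull valuation: its support is trivial. -/
def IsKrullVal (v : Polynomial K → WithTop Γ) : Prop :=
  ∀ f : Polynomial K, f ≠ 0 → v f ≠ ⊤

/-- The quotient group `v(K[x])/ν₀K` is a torsion group: every value of `v` has a positive
multiple lying in the value group of `ν₀`. -/
def TorsionOverBase (ν₀ : ValOn K Γ) (v : Polynomial K → WithTop Γ) : Prop :=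
  ∀ f : Polynomial K, f ≠ 0 → ∃ m : ℕ, 0 < m ∧ ∃ a : K, a ≠ 0 ∧ m • v f = ν₀.v a

/-- `v` (a valuation on `K[x]` extending `ν₀`) is residue-transcendental: it is Krull and the
residue field extension `K(x)v ∣ Kν₀` is transcendental, i.e. there are `f, g` with
`v f = v g` whose residue `res(f/g)` is transcendental over `Kν₀`: every polynomial over
`Kν₀` (with coefficients `res(c_i)`, not all zero) does not vanish at `res(f/g)`. -/
def ResidueTranscendental (ν₀ : ValOn K Γ) (v : Polynomial K → WithTop Γ) : Prop :=
  IsKrullVal v ∧ ∃ f g : Polynomial K, f ≠ 0 ∧ g ≠ 0 ∧ v f = v g ∧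
    ∀ (n : ℕ) (c : ℕ → K), (∀ i, 0 ≤ ν₀.v (c i)) → (∃ i, i ≤ n ∧ ν₀.v (c i) = 0) →
      v (∑ i ∈ Finset.range (n + 1), Polynomial.C (c i) * f ^ i * g ^ (n - i)) = v (g ^ n)

/-- `v` is value-transcendental: it is not Krull, or `v(K[x])/ν₀K` is not torsion. -/
def ValueTranscendental (ν₀ : ValOn K Γ) (v : Polynomial K → WithTop Γ) : Prop :=
  ¬ IsKrullVal v ∨ ¬ TorsionOverBase ν₀ v

/-- `v` is valuation-transcendental. -/
def ValuationTranscendental (ν₀ : ValOn K Γ) (v : Polynomial K → WithTop Γ) : Prop :=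
  ValueTranscendental ν₀ v ∨ ResidueTranscendental ν₀ v

/-- `v` is valuation-algebraic. -/
def ValuationAlgebraic (ν₀ : ValOn K Γ) (v : Polynomial K → WithTop Γ) : Prop :=
  ¬ ValuationTranscendental ν₀ v

end PolyDefs

/-! Every `ν i` lies below `w`, so the maps `phi (ν i) w` are compatible and induce a ring map
from the direct limit to `G_w`. An element of any of these graded rings is represented by
finitely many homogeneous pieces, i.e. finitely many polynomials, and by stability `ν j` agrees
with `w` on all of them once `j` is large. So a representative over `w` already lives over some
`ν j` (surjectivity), and a representative that vanishes in `G_w` already vanishes in some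
`G_{ν j}` (injectivity). -/

open Filter

namespace ValOn

variable {R : Type*} [CommRing R] {Γ : Type*} [AddCommGroup Γ] [LinearOrder Γ] [IsOrderedAddMonoid Γ]

theorem phi_mk {w₁ w₂ : ValOn R Γ} (h : ∀ f, w₁.v f ≤ w₂.v f) (s : gradedCarrier w₁) :
    phi w₁ w₂ h (Ideal.Quotient.mk _ s) =
      Ideal.Quotient.mk _ (Subring.inclusion (gradedCarrier_mono h) s) :=
  rfl

theorem phi_phi {w₁ w₂ w₃ : ValOn R Γ} (h₁₂ : ∀ f, w₁.v f ≤ w₂.v f)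
    (h₂₃ : ∀ f, w₂.v f ≤ w₃.v f) (h₁₃ : ∀ f, w₁.v f ≤ w₃.v f) (x : Graded w₁) :
    phi w₂ w₃ h₂₃ (phi w₁ w₂ h₁₂ x) = phi w₁ w₃ h₁₃ x := by
  obtain ⟨s, rfl⟩ := Ideal.Quotient.mk_surjective x
  rfl

section DirectLimit

variable {I : Type*} [Preorder I] {ν : I → ValOn R Γ} {w : ValOn R Γ}

theorem eventually_coeff_eq (hlim : ∀ f, ∀ᶠ i in atTop, (ν i).v f = w.v f)
    (s : AddMonoidAlgebra R Γ) :
    ∀ᶠ i in atTop, ∀ γ, (ν i).v (s.coeff γ) = w.v (s.coeff γ) := by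
  filter_upwards [(eventually_all_finset s.coeff.support).2 fun γ _ => hlim (s.coeff γ)]
    with i hi γ
  by_cases hγ : γ ∈ s.coeff.support
  · exact hi γ hγ
  · rw [Finsupp.notMem_support_iff.1 hγ, v_zero, v_zero]

theorem v_le_of_eventually_eq [Nonempty I] [IsDirectedOrder I]
    (hmono : ∀ i j : I, i ≤ j → ∀ f, (ν i).v f ≤ (ν j).v f)
    (hlim : ∀ f, ∀ᶠ i in atTop, (ν i).v f = w.v f) (i : I) (f : R) :
    (ν i).v f ≤ w.v f := by
  obtain ⟨j, hij, hj⟩ := ((eventually_ge_atTop i).and (hlim f)).exists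
  exact hj ▸ hmono i j hij f

variable (hmono : ∀ i j : I, i ≤ j → ∀ f, (ν i).v f ≤ (ν j).v f)
  (hle : ∀ i f, (ν i).v f ≤ w.v f)

noncomputable def directLimitToGraded :
    Ring.DirectLimit (fun i => Graded (ν i)) (fun i j h => ⇑(phi (ν i) (ν j) (hmono i j h))) →+*
      Graded w :=
  Ring.DirectLimit.lift _ _ _ (fun i => phi (ν i) w (hle i))
    fun i j hij => phi_phi (hmono i j hij) (hle j) (hle i)

theorem directLimitToGraded_of (i : I) (x : Graded (ν i)) :
    directLimitToGraded hmono hle (Ring.DirectLimit.of _ _ i x) = phi (ν i) w (hle i) x :=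
  Ring.DirectLimit.lift_of _ _ _ _ _

variable [Nonempty I] [IsDirectedOrder I]

theorem directLimitToGraded_surjective (hlim : ∀ f, ∀ᶠ i in atTop, (ν i).v f = w.v f) :
    Function.Surjective (directLimitToGraded hmono hle) := by
  intro y
  obtain ⟨s, rfl⟩ := Ideal.Quotient.mk_surjective y
  obtain ⟨i, hi⟩ := (eventually_coeff_eq hlim (s : AddMonoidAlgebra R Γ)).exists
  have hs : (s : AddMonoidAlgebra R Γ) ∈ gradedCarrier (ν i) := fun γ => hi γ ▸ s.2 γ
  exact ⟨Ring.DirectLimit.of _ _ i (Ideal.Quotient.mk _ ⟨s, hs⟩),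
    by rw [directLimitToGraded_of, phi_mk]; rfl⟩

theorem directLimitToGraded_injective (hlim : ∀ f, ∀ᶠ i in atTop, (ν i).v f = w.v f) :
    Function.Injective (directLimitToGraded hmono hle) := by
  refine (injective_iff_map_eq_zero _).2 fun z hz => ?_
  obtain ⟨i, x, rfl⟩ := Ring.DirectLimit.exists_of z
  obtain ⟨s, rfl⟩ := Ideal.Quotient.mk_surjective x
  rw [directLimitToGraded_of, phi_mk, Ideal.Quotient.eq_zero_iff_mem] at hz
  obtain ⟨j, hij, hj⟩ :=
    ((eventually_ge_atTop i).and (eventually_coeff_eq hlim (s : AddMonoidAlgebra R Γ))).exists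
  have hs : phi (ν i) (ν j) (hmono i j hij) (Ideal.Quotient.mk _ s) = 0 := by
    rw [phi_mk, Ideal.Quotient.eq_zero_iff_mem]
    exact fun γ => (hj γ).symm ▸ hz γ
  rw [← Ring.DirectLimit.of_f hij, hs, map_zero]

end DirectLimit

end ValOn

theorem directLimit_iso_graded_of_sup_general
    {K : Type*} [Field K] {Γ : Type*} [AddCommGroup Γ] [LinearOrder Γ] [IsOrderedAddMonoid Γ]
    {I : Type*} [LinearOrder I] [Nonempty I]
    (ν : I → ValOn (Polynomial K) Γ)
    (hmono : ∀ i j : I, i ≤ j → ∀ f : Polynomial K, (ν i).v f ≤ (ν j).v f)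
    (hstab : ∀ f : Polynomial K, Stable ν f)
    (w : ValOn (Polynomial K) Γ)
    (hw : ∀ (f : Polynomial K) (i : I), (∀ j : I, i ≤ j → (ν j).v f = (ν i).v f) →
      w.v f = (ν i).v f) :
    Nonempty ((Ring.DirectLimit (fun i => Graded (ν i))
        (fun i j h => ⇑(phi (ν i) (ν j) (hmono i j h)))) ≃+* Graded w) := by
  have hlim : ∀ f, ∀ᶠ i in atTop, (ν i).v f = w.v f := fun f => by
    obtain ⟨i, hi⟩ := hstab f
    exact eventually_atTop.2 ⟨i, fun j hj => (hi j hj).trans (hw f i hi).symm⟩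
  have hle := v_le_of_eventually_eq hmono hlim
  exact ⟨RingEquiv.ofBijective (directLimitToGraded hmono hle)
    ⟨directLimitToGraded_injective hmono hle hlim, directLimitToGraded_surjective hmono hle hlim⟩⟩

/-- If every `f` is `𝔳`-stable and `ν = sup ν_i` (i.e.
`ν(f) = ν_{i_f}(f)`), then `lim→ G_{ν_i} ≅ G_ν` as commutative rings with unity. -/
theorem directLimit_iso_graded_of_sup
    {K : Type*} [Field K] {Γ : Type*} [AddCommGroup Γ] [LinearOrder Γ] [IsOrderedAddMonoid Γ]
    {I : Type*} [LinearOrder I] [Nonempty I]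
    (ν₀ : ValOn K Γ) (ν : I → ValOn (Polynomial K) Γ)
    (hext : ∀ (i : I) (a : K), (ν i).v (Polynomial.C a) = ν₀.v a)
    (hmono : ∀ i j : I, i ≤ j → ∀ f : Polynomial K, (ν i).v f ≤ (ν j).v f)
    (hstrict : ∀ i j : I, i < j → ∃ f : Polynomial K, (ν i).v f < (ν j).v f)
    (hstab : ∀ f : Polynomial K, Stable ν f)
    (w : ValOn (Polynomial K) Γ)
    (hwext : ∀ a : K, w.v (Polynomial.C a) = ν₀.v a)
    (hw : ∀ (f : Polynomial K) (i : I), (∀ j : I, i ≤ j → (ν j).v f = (ν i).v f) →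
      w.v f = (ν i).v f) :
    Nonempty ((Ring.DirectLimit (fun i => Graded (ν i))
        (fun i j h => ⇑(phi (ν i) (ν j) (hmono i j h)))) ≃+* Graded w) :=
  directLimit_iso_graded_of_sup_general ν hmono hstab w hw
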